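/- arXiv:2412.04156 — 3 statements merged into one kernel-verified Lean document; each statement's English description precedes it below -/
import Mathlib

section
/- Let Φ be a 2-CNF and l a literal. If there exists 0 ≤ t₀ ≤ T(Φ) such that every literal in ℒ(Φ,{l}) is true under the WalkSAT assignment σ^{(t₀)}, then every literal in ℒ(Φ,{l}) is true under σ^{(t)} for all t₀ < t ≤ T(Φ). -/
open Filter

open scoped Classical

/-- A literal is a sign (`true` = positive) together with a variable. -/
abbrev Lit (V : Type) := Bool × V

/-- A 2-clause is a disjunction of two literals. -/
abbrev Clause (V : Type) := Lit V × Lit V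

/-- A 2-CNF is a finite list of 2-clauses. -/
abbrev CNF (V : Type) := List (Clause V)

/-- The negation of a literal. -/
def Lit.negate {V : Type} (l : Lit V) : Lit V := (!l.1, l.2)

/-- A literal is satisfied by an assignment if the variable is assigned its sign. -/
def litSat {V : Type} (σ : V → Bool) (l : Lit V) : Prop := σ l.2 = l.1

/-- A clause is satisfied if one of its two literals is. -/
def clauseSat {V : Type} (σ : V → Bool) (c : Clause V) : Prop := litSat σ c.1 ∨ litSat σ c.2

/-- A 2-CNF is satisfied if all of its clauses are. -/
def cnfSat {V : Type} (σ : V → Bool) (Φ : CNF V) : Prop := ∀ c ∈ Φ, clauseSat σ c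

instance {V : Type} (σ : V → Bool) (l : Lit V) : Decidable (litSat σ l) := by
  unfold litSat; infer_instance

instance {V : Type} (σ : V → Bool) (c : Clause V) : Decidable (clauseSat σ c) := by
  unfold clauseSat; infer_instance

instance {V : Type} (σ : V → Bool) (Φ : CNF V) : Decidable (cnfSat σ Φ) := by
  unfold cnfSat; infer_instance

/-- In a proper 2-CNF, the two literals of each clause have distinct variables. -/
def validCNF {V : Type} (Φ : CNF V) : Prop := ∀ c ∈ Φ, c.1.2 ≠ c.2.2

/-- A set `L` of literals is closed under Unit Clause Propagation on `Φ`: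
whenever a clause can be written `¬ l' ∨ l''` with `l' ∈ L`, also `l'' ∈ L`. -/
def ucpClosed {V : Type} (Φ : CNF V) (L : Set (Lit V)) : Prop :=
  ∀ c ∈ Φ, (Lit.negate c.1 ∈ L → c.2 ∈ L) ∧ (Lit.negate c.2 ∈ L → c.1 ∈ L)

/-- `ℒ(Φ, {l})`: the set of literals produced by UCP from `{l}`, i.e. the least
set containing `l` that is closed under unit clause propagation. -/
def ucpLits {V : Type} (Φ : CNF V) (l : Lit V) : Set (Lit V) :=
  ⋂₀ {L : Set (Lit V) | l ∈ L ∧ ucpClosed Φ L}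

/-- `𝒱(Φ, {l})`: the variables underlying `ℒ(Φ, {l})`. -/
def ucpVars {V : Type} (Φ : CNF V) (l : Lit V) : Set V := Prod.snd '' ucpLits Φ l

/-! ### WalkSAT -/

/-- Flip the value of variable `v` in assignment `σ`. -/
def flipVar {V : Type} [DecidableEq V] (σ : V → Bool) (v : V) : V → Bool :=
  fun u => if u = v then !σ u else σ u

/-- The list of clauses of `Φ` violated by `σ`. -/
def violated {V : Type} (Φ : CNF V) (σ : V → Bool) : List (Clause V) :=
  Φ.filter fun c => decide (¬ clauseSat σ c)

/-- One step of WalkSAT, driven by a random seed `s`.  If `σ` violates some clause,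
then a violated clause is selected via `s.1 % (number of violated clauses)`
(this is a uniformly random violated clause, since `s.1` is uniform on
`Fin (Φ.length)!` and the number of violated clauses divides `(Φ.length)!`),
one of its two literals is selected via the uniform bit `s.2`, and the underlying
variable is flipped.  If `σ` satisfies `Φ`, nothing happens. -/
def wsNext {V : Type} [DecidableEq V] (Φ : CNF V) (s : ℕ × Bool) (σ : V → Bool) : V → Bool :=
  if h : (violated Φ σ).length = 0 then σ
  else
    let c := (violated Φ σ).get ⟨s.1 % (violated Φ σ).length, Nat.mod_lt _ (Nat.pos_of_ne_zero h)⟩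
    flipVar σ (if s.2 then c.1.2 else c.2.2)

/-- The space of random seeds driving one run of WalkSAT on `Φ` (at most
`100 n²` steps, each using an independent uniform pair).  The uniform measure on
this finite space makes each step's clause/literal choices uniform and independent. -/
abbrev wsSeedSpace (V : Type) [Fintype V] (Φ : CNF V) : Type :=
  Fin (100 * (Fintype.card V) ^ 2) → Fin (Nat.factorial Φ.length) × Bool

/-- `σ^{(t)}`: the WalkSAT assignment after `t` steps, starting from the all-true
assignment, for the realization `ω` of the random seeds.  After `100 n²` steps, or
once `Φ` is satisfied, the assignment no longer changes. -/
def wsState {V : Type} [Fintype V] [DecidableEq V] (Φ : CNF V) (ω : wsSeedSpace V Φ) :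
    ℕ → (V → Bool)
  | 0 => fun _ => true
  | t + 1 =>
    if h : t < 100 * (Fintype.card V) ^ 2 then
      wsNext Φ (((ω ⟨t, h⟩).1 : ℕ), (ω ⟨t, h⟩).2) (wsState Φ ω t)
    else wsState Φ ω t

/-- `T(Φ)`: the total number of flips WalkSAT performs, i.e. the first time the
current assignment satisfies `Φ` (capped at the time limit `100 n²`). -/
noncomputable def wsT {V : Type} [Fintype V] [DecidableEq V] (Φ : CNF V)
    (ω : wsSeedSpace V Φ) : ℕ :=
  sInf ({t | cnfSat (wsState Φ ω t) Φ} ∪ {100 * (Fintype.card V) ^ 2})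

/-- `N(Φ, l)`: the total number of times WalkSAT flips variables from `𝒱(Φ,{l})`. -/
noncomputable def wsN {V : Type} [Fintype V] [DecidableEq V] (Φ : CNF V)
    (ω : wsSeedSpace V Φ) (l : Lit V) : ℕ :=
  ∑ v ∈ (Set.toFinite (ucpVars Φ l)).toFinset,
    ∑ t ∈ Finset.Icc 1 (wsT Φ ω),
      if wsState Φ ω (t - 1) v ≠ wsState Φ ω t v then 1 else 0

/-- Expectation over the random choices of WalkSAT (uniform over all seeds). -/
noncomputable def wsExp {V : Type} [Fintype V] [DecidableEq V] (Φ : CNF V)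
    (g : wsSeedSpace V Φ → ℝ) : ℝ :=
  (∑ ω : wsSeedSpace V Φ, g ω) / (Fintype.card (wsSeedSpace V Φ) : ℝ)

/-! ### The random formula `Φ_{n,m}` -/

/-- A sample point for the random 2-CNF: an ordered tuple of `m` clauses on the
variables `x₁, …, xₙ`. -/
abbrev FSpace (n m : ℕ) : Type := Fin m → Clause (Fin n)

/-- The 2-CNF corresponding to a sample point. -/
def toCNF {n m : ℕ} (f : FSpace n m) : CNF (Fin n) := List.ofFn f

/-- The set of proper sample points: each of the `m` clauses is one of the
`4n(n-1)` 2-clauses on two distinct variables.  The uniform distribution on this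
finite set is exactly the distribution of `Φ_{n,m}` (m independent uniform clauses). -/
noncomputable def validFormulas (n m : ℕ) : Finset (FSpace n m) :=
  Finset.univ.filter fun f => ∀ i, (f i).1.2 ≠ (f i).2.2

/-- Probability of an event under the random 2-CNF `Φ_{n,m}`. -/
noncomputable def prF (n m : ℕ) (P : FSpace n m → Prop) : ℝ :=
  (((validFormulas n m).filter fun f => P f).card : ℝ) / ((validFormulas n m).card : ℝ)

/-- Expectation of a functional of the random 2-CNF `Φ_{n,m}`. -/
noncomputable def expF (n m : ℕ) (g : FSpace n m → ℝ) : ℝ :=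
  (∑ f ∈ validFormulas n m, g f) / ((validFormulas n m).card : ℝ)

/-- `X(Φ) = Σ_x (|𝒱(Φ,{x})|² + |𝒱(Φ,{¬x})|²)`. -/
noncomputable def Xval (n : ℕ) (Φ : CNF (Fin n)) : ℝ :=
  ∑ x : Fin n,
    (((ucpVars Φ (true, x)).ncard : ℝ) ^ 2 + ((ucpVars Φ (false, x)).ncard : ℝ) ^ 2)

/-! A violated clause cannot share a variable with a UCP-closed set `L` of true literals: the
clause's literal on that variable would be false, hence the negation of a literal of `L`, so
closure puts the other literal of the clause in `L`, making it true. Hence WalkSAT never flips a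
variable of `ℒ(Φ,{l})` once all of its literals are true. -/

theorem ucpLits_ucpClosed {V : Type} (Φ : CNF V) (l : Lit V) : ucpClosed Φ (ucpLits Φ l) :=
  fun c hc => ⟨fun h L hL => (hL.2 c hc).1 (h L hL), fun h L hL => (hL.2 c hc).2 (h L hL)⟩

section

variable {V : Type} {Φ : CNF V} {L : Set (Lit V)} {σ : V → Bool}

theorem mem_violated {c : Clause V} : c ∈ violated Φ σ ↔ c ∈ Φ ∧ ¬ clauseSat σ c := by
  simp [violated]

theorem Lit.negate_eq_of_litSat_of_not_litSat {l l' : Lit V} (hl : litSat σ l)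
    (hl' : ¬ litSat σ l') (h : l.2 = l'.2) : Lit.negate l' = l := by
  obtain ⟨b, v⟩ := l
  obtain ⟨b', v'⟩ := l'
  obtain rfl : v = v' := h
  simp only [litSat] at hl hl'
  subst hl
  simpa [Lit.negate, Bool.eq_not_iff, eq_comm] using hl'

theorem var_ne_of_not_clauseSat (hL : ucpClosed Φ L) (hσ : ∀ l ∈ L, litSat σ l)
    {c : Clause V} (hc : c ∈ Φ) (hviol : ¬ clauseSat σ c) {l : Lit V} (hl : l ∈ L) :
    l.2 ≠ c.1.2 ∧ l.2 ≠ c.2.2 := by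
  constructor <;> intro heq
  · have hneg := Lit.negate_eq_of_litSat_of_not_litSat (hσ l hl) (hviol ∘ Or.inl) heq
    exact hviol (Or.inr (hσ _ ((hL c hc).1 (hneg ▸ hl))))
  · have hneg := Lit.negate_eq_of_litSat_of_not_litSat (hσ l hl) (hviol ∘ Or.inr) heq
    exact hviol (Or.inl (hσ _ ((hL c hc).2 (hneg ▸ hl))))

theorem litSat_flipVar_of_ne [DecidableEq V] {l : Lit V} {v : V} (h : l.2 ≠ v) :
    litSat (flipVar σ v) l ↔ litSat σ l := by
  simp [litSat, flipVar, h]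

theorem litSat_wsNext [DecidableEq V] (hL : ucpClosed Φ L) (hσ : ∀ l ∈ L, litSat σ l)
    (s : ℕ × Bool) : ∀ l ∈ L, litSat (wsNext Φ s σ) l := by
  by_cases hnil : (violated Φ σ).length = 0
  · rw [wsNext, dif_pos hnil]
    exact hσ
  · rw [wsNext, dif_neg hnil]
    intro l hl
    obtain ⟨hc, hviol⟩ := mem_violated.mp
      (List.get_mem _ ⟨s.1 % _, Nat.mod_lt _ (Nat.pos_of_ne_zero hnil)⟩)
    obtain ⟨hne₁, hne₂⟩ := var_ne_of_not_clauseSat hL hσ hc hviol hl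
    rw [litSat_flipVar_of_ne (by split_ifs <;> assumption)]
    exact hσ l hl

theorem litSat_wsState_of_le [Fintype V] [DecidableEq V] (hL : ucpClosed Φ L)
    {ω : wsSeedSpace V Φ} {t₀ t : ℕ} (h : ∀ l ∈ L, litSat (wsState Φ ω t₀) l) (ht : t₀ ≤ t) :
    ∀ l ∈ L, litSat (wsState Φ ω t) l := by
  induction t, ht using Nat.le_induction with
  | base => exact h
  | succ t _ ih =>
    rw [wsState]
    split_ifs
    exacts [litSat_wsNext hL ih _, ih]

end

theorem stmt_3_general {V : Type} [Fintype V] [DecidableEq V] (Φ : CNF V)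
    (l : Lit V) (ω : wsSeedSpace V Φ) (t₀ : ℕ)
    (h : ∀ l' ∈ ucpLits Φ l, litSat (wsState Φ ω t₀) l') :
    ∀ t, t₀ < t → t ≤ wsT Φ ω → ∀ l' ∈ ucpLits Φ l, litSat (wsState Φ ω t) l' :=
  fun _ ht _ => litSat_wsState_of_le (ucpLits_ucpClosed Φ l) h ht.le

/-- **Proposition 2.2.** Let `Φ` be a 2-CNF and `l` a literal.  For every realization `ω` of the
random choices of WalkSAT: if there exists `0 ≤ t₀ ≤ T(Φ)` such that every literal of `ℒ(Φ,{l})`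
is true under `σ^{(t₀)}`, then every literal of `ℒ(Φ,{l})` is true under `σ^{(t)}` for all
`t₀ < t ≤ T(Φ)`. -/
theorem stmt_3 {V : Type} [Fintype V] [DecidableEq V] (Φ : CNF V) (hΦ : validCNF Φ)
    (l : Lit V) (ω : wsSeedSpace V Φ) (t₀ : ℕ) (ht₀ : t₀ ≤ wsT Φ ω)
    (h : ∀ l' ∈ ucpLits Φ l, litSat (wsState Φ ω t₀) l') :
    ∀ t, t₀ < t → t ≤ wsT Φ ω → ∀ l' ∈ ucpLits Φ l, litSat (wsState Φ ω t) l' :=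
  stmt_3_general Φ l ω t₀ h
end

section
/- Let Φ be a satisfiable 2-CNF with variable set V and σ* a satisfying assignment of Φ. Then, for every realization of the random choices of WalkSAT, the total number of flips satisfies T(Φ) ≤ Σ_{x ∈ V} N(Φ, σ*(x)·x). -/
open Filter

open scoped Classical

/-!
Every WalkSAT step before termination flips exactly one variable `x`, and `x` lies in its own
propagation set `𝒱(Φ, {σ*(x)·x})`, so that flip is counted in `N(Φ, σ*(x)·x)`.
-/

theorem mem_ucpVars_self {V : Type} (Φ : CNF V) (l : Lit V) : l.2 ∈ ucpVars Φ l :=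
  ⟨l, fun _ hL => hL.1, rfl⟩

theorem flipVar_apply_self_ne {V : Type} [DecidableEq V] (σ : V → Bool) (v : V) :
    σ v ≠ flipVar σ v v := by
  simp [flipVar]

theorem violated_length_ne_zero {V : Type} {Φ : CNF V} {σ : V → Bool} (h : ¬ cnfSat σ Φ) :
    (violated Φ σ).length ≠ 0 := by
  simp only [cnfSat, not_forall] at h
  obtain ⟨c, hc, hviol⟩ := h
  exact List.length_pos_of_mem (List.mem_filter.mpr ⟨hc, decide_eq_true hviol⟩) |>.ne'

theorem exists_ne_wsNext {V : Type} [DecidableEq V] {Φ : CNF V} {σ : V → Bool}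
    (h : ¬ cnfSat σ Φ) (s : ℕ × Bool) : ∃ v, σ v ≠ wsNext Φ s σ v := by
  simp only [wsNext, dif_neg (violated_length_ne_zero h)]
  exact ⟨_, flipVar_apply_self_ne σ _⟩

section WalkSAT

variable {V : Type} [Fintype V] [DecidableEq V] (Φ : CNF V) (ω : wsSeedSpace V Φ)

noncomputable def wsFlips (v : V) : ℕ :=
  ∑ t ∈ Finset.Icc 1 (wsT Φ ω), if wsState Φ ω (t - 1) v ≠ wsState Φ ω t v then 1 else 0

theorem wsFlips_le_wsN {v : V} {l : Lit V} (hv : v ∈ ucpVars Φ l) :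
    wsFlips Φ ω v ≤ wsN Φ ω l :=
  Finset.single_le_sum (f := wsFlips Φ ω) (fun _ _ => Nat.zero_le _)
    ((Set.toFinite _).mem_toFinset.mpr hv)

theorem wsT_le : wsT Φ ω ≤ 100 * Fintype.card V ^ 2 :=
  Nat.sInf_le (Or.inr rfl)

theorem not_cnfSat_wsState_of_lt_wsT {t : ℕ} (ht : t < wsT Φ ω) :
    ¬ cnfSat (wsState Φ ω t) Φ :=
  fun hsat => (Nat.sInf_le (Or.inl hsat)).not_gt ht

theorem exists_flip_of_lt_wsT {t : ℕ} (ht : t < wsT Φ ω) :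
    ∃ v, wsState Φ ω t v ≠ wsState Φ ω (t + 1) v := by
  have hlimit : t < 100 * Fintype.card V ^ 2 := ht.trans_le (wsT_le Φ ω)
  simp only [wsState, dif_pos hlimit]
  exact exists_ne_wsNext (not_cnfSat_wsState_of_lt_wsT Φ ω ht) _

theorem wsT_le_sum_wsFlips : wsT Φ ω ≤ ∑ v : V, wsFlips Φ ω v := by
  simp only [wsFlips]
  rw [Finset.sum_comm]
  calc wsT Φ ω = ∑ _t ∈ Finset.Icc 1 (wsT Φ ω), 1 := by simp
    _ ≤ _ := Finset.sum_le_sum fun t ht => by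
      obtain ⟨ht1, htT⟩ := Finset.mem_Icc.mp ht
      obtain ⟨v, hv⟩ := exists_flip_of_lt_wsT Φ ω (t := t - 1) (by omega)
      rw [Nat.sub_add_cancel ht1] at hv
      rw [Finset.sum_boole, Nat.cast_id, Nat.one_le_iff_ne_zero, Finset.card_ne_zero]
      exact ⟨v, Finset.mem_filter.mpr ⟨Finset.mem_univ v, hv⟩⟩

end WalkSAT

theorem stmt_4_general {V : Type} [Fintype V] [DecidableEq V] (Φ : CNF V)
    (σstar : V → Bool) (ω : wsSeedSpace V Φ) :
    wsT Φ ω ≤ ∑ x : V, wsN Φ ω (σstar x, x) :=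
  (wsT_le_sum_wsFlips Φ ω).trans <| Finset.sum_le_sum fun x _ =>
    wsFlips_le_wsN Φ ω (mem_ucpVars_self Φ (σstar x, x))

/-- **Fact 2.4.** Let `Φ` be a satisfiable 2-CNF with satisfying assignment `σ*`.  Then, for every
realization `ω` of the random choices of WalkSAT, the total number of flips satisfies
`T(Φ) ≤ Σ_{x ∈ V} N(Φ, σ*(x)·x)`. -/
theorem stmt_4 {V : Type} [Fintype V] [DecidableEq V] (Φ : CNF V) (hΦ : validCNF Φ)
    (σstar : V → Bool) (hsat : cnfSat σstar Φ) (ω : wsSeedSpace V Φ) :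
    wsT Φ ω ≤ ∑ x : V, wsN Φ ω (σstar x, x) :=
  stmt_4_general Φ σstar ω
end

section
/- Let G(n,M) be the uniform Erdős–Rényi random graph with n vertices and M = M(n) ~ 0.15 n edges. Then, for sufficiently large n, Σ_{v ∈ V(G(n,M))} E[|C(v)|²] ≤ 5n, where C(v) denotes the connected component of vertex v. -/
/-!
`∑ v, |C(v)|²` counts the triples `(v, u, w)` with `u` and `w` in the component of `v`. Such a
triple is witnessed by a path from `v` to `u` with `a` edges together with a path from `w` with `b`
edges that meets the first one only in its last vertex. These `a + b` edges are distinct, and there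
are at most `n ^ (a + 1) * (a + 1) * n ^ b` such configurations, while a fixed set of `k` edges lies
in `G(n, M)` with probability at most `(M / N) ^ k`, `N = n.choose 2`. With `d = n M / N ≈ 0.3`
the expected number of triples is therefore at most
`n * ∑ a, (a + 1) d ^ a * ∑ b, d ^ b ≤ n / (1 - d) ^ 3 < 5 n`.
-/

open Filter

open scoped Classical

/-- The sample space of the Erdős–Rényi random graph `G(n, M)`: all sets of exactly `M` edges
(non-loops) on the vertex set `Fin n`; the random graph is uniform on this set. -/
noncomputable def edgeSets (n M : ℕ) : Finset (Finset (Sym2 (Fin n))) :=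
  Finset.univ.filter fun E => E.card = M ∧ ∀ e ∈ E, ¬ e.IsDiag

/-- `|C(v)|`: the number of vertices of the connected component of `v` in the graph with edge
set `E`. -/
noncomputable def compSize {n : ℕ} (E : Finset (Sym2 (Fin n))) (v : Fin n) : ℕ :=
  {u | (SimpleGraph.fromEdgeSet (E : Set (Sym2 (Fin n)))).Reachable u v}.ncard

open Finset SimpleGraph Function

theorem Nat.descFactorial_mul_pow_le_pow_mul_descFactorial {M N : ℕ} (hMN : M ≤ N) (k : ℕ) :
    M.descFactorial k * N ^ k ≤ M ^ k * N.descFactorial k := by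
  induction k with
  | zero => simp
  | succ k ih =>
    have hstep : (M - k) * N ≤ M * (N - k) := by
      rw [Nat.sub_mul, Nat.mul_sub, Nat.mul_comm M k]
      exact Nat.sub_le_sub_left (Nat.mul_le_mul_left k hMN) _
    rw [Nat.descFactorial_succ, Nat.descFactorial_succ, pow_succ, pow_succ]
    calc (M - k) * M.descFactorial k * (N ^ k * N)
        = (M - k) * N * (M.descFactorial k * N ^ k) := by ring
      _ ≤ M * (N - k) * (M ^ k * N.descFactorial k) := Nat.mul_le_mul hstep ih
      _ = M ^ k * M * ((N - k) * N.descFactorial k) := by ring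

theorem Nat.choose_mul_pow_le_pow_mul_choose {M N : ℕ} (hMN : M ≤ N) (k : ℕ) :
    M.choose k * N ^ k ≤ M ^ k * N.choose k := by
  have h := Nat.descFactorial_mul_pow_le_pow_mul_descFactorial hMN k
  rw [Nat.descFactorial_eq_factorial_mul_choose, Nat.descFactorial_eq_factorial_mul_choose,
    mul_assoc, mul_left_comm (M ^ k)] at h
  exact Nat.le_of_mul_le_mul_left h k.factorial_pos

namespace Finset

variable {α : Type*} [DecidableEq α]

theorem card_filter_powersetCard_subset_mul_pow_le (D S : Finset α) (M : ℕ) :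
    #{E ∈ D.powersetCard M | S ⊆ E} * #D ^ #S ≤ #(D.powersetCard M) * M ^ #S := by
  by_cases h : S ⊆ D ∧ #S ≤ M ∧ M ≤ #D
  · obtain ⟨hSD, hSM, hMD⟩ := h
    rw [card_filter_powersetCard_subset S D M hSD hSM, card_powersetCard]
    refine Nat.le_of_mul_le_mul_left ?_ (Nat.choose_pos (hSM.trans hMD))
    calc (#D).choose #S * ((#D - #S).choose (M - #S) * #D ^ #S)
        = (#D).choose M * (M.choose #S * #D ^ #S) := by
          rw [← mul_assoc, ← Nat.choose_mul hSM]; ring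
      _ ≤ (#D).choose M * (M ^ #S * (#D).choose #S) :=
          Nat.mul_le_mul_left _ (Nat.choose_mul_pow_le_pow_mul_choose hMD _)
      _ = (#D).choose #S * ((#D).choose M * M ^ #S) := by ring
  · have hempty : {E ∈ D.powersetCard M | S ⊆ E} = ∅ :=
      filter_eq_empty_iff.mpr fun E hE hSE => by
        rw [mem_powersetCard] at hE
        exact h ⟨hSE.trans hE.1, hE.2 ▸ card_le_card hSE, hE.2 ▸ card_le_card hE.1⟩
    simp [hempty]

theorem card_filter_powersetCard_subset_le {D : Finset α} (hD : D.Nonempty) (S : Finset α)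
    (M : ℕ) :
    (#{E ∈ D.powersetCard M | S ⊆ E} : ℝ) ≤
      #(D.powersetCard M) * ((M : ℝ) / #D) ^ #S := by
  have hD : (0 : ℝ) < #D := by exact_mod_cast hD.card_pos
  rw [div_pow, ← mul_div_assoc, le_div_iff₀ (by positivity)]
  exact_mod_cast card_filter_powersetCard_subset_mul_pow_le D S M

end Finset

theorem SimpleGraph.Walk.IsPath.injective_getVert {V : Type*} {G : SimpleGraph V} {u v : V}
    {p : G.Walk u v} (hp : p.IsPath) {j : ℕ} (hj : j ≤ p.length) :
    Injective fun i : Fin (j + 1) => p.getVert i := fun i i' h =>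
  Fin.ext <| hp.getVert_injOn (show (i : ℕ) ≤ p.length by omega)
    (show (i' : ℕ) ≤ p.length by omega) h

section PathEdges

variable {V : Type*} [DecidableEq V]

def pathEdges {k : ℕ} (f : Fin (k + 1) → V) : Finset (Sym2 V) :=
  univ.image fun i : Fin k => s(f i.castSucc, f i.succ)

theorem mem_pathEdges {k : ℕ} {f : Fin (k + 1) → V} {e : Sym2 V} :
    e ∈ pathEdges f ↔ ∃ i : Fin k, s(f i.castSucc, f i.succ) = e := by
  simp [pathEdges]

theorem card_pathEdges {k : ℕ} {f : Fin (k + 1) → V} (hf : Injective f) :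
    #(pathEdges f) = k := by
  rw [pathEdges, card_image_of_injective _ ?_, card_univ, Fintype.card_fin]
  intro i j hij
  rcases Sym2.eq_iff.mp hij with ⟨h, -⟩ | ⟨h₁, h₂⟩
  · exact Fin.castSucc_injective _ (hf h)
  · have h₁ := congrArg Fin.val (hf h₁)
    have h₂ := congrArg Fin.val (hf h₂)
    simp only [Fin.val_castSucc, Fin.val_succ] at h₁ h₂
    omega

theorem SimpleGraph.Walk.coe_pathEdges_getVert_subset {G : SimpleGraph V} {u v : V}
    (p : G.Walk u v) {j : ℕ} (hj : j ≤ p.length) :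
    ↑(pathEdges fun i : Fin (j + 1) => p.getVert i) ⊆ G.edgeSet := by
  intro e he
  obtain ⟨i, rfl⟩ := mem_pathEdges.mp he
  simpa using p.adj_getVert_succ (i := i) (by omega)

end PathEdges

structure Witness (V : Type*) (a b : ℕ) where
  trunk : Fin (a + 1) → V
  attach : Fin (a + 1)
  branch : Fin b → V

namespace Witness

variable {V : Type*} {a b : ℕ}

def equivProd : Witness V a b ≃ (Fin (a + 1) → V) × Fin (a + 1) × (Fin b → V) where
  toFun θ := (θ.trunk, θ.attach, θ.branch)
  invFun x := ⟨x.1, x.2.1, x.2.2⟩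

instance [Fintype V] : Fintype (Witness V a b) :=
  Fintype.ofEquiv _ equivProd.symm

theorem card [Fintype V] :
    Fintype.card (Witness V a b) =
      Fintype.card V ^ (a + 1) * ((a + 1) * Fintype.card V ^ b) := by
  simp [Fintype.card_congr equivProd]

def branchPath (θ : Witness V a b) : Fin (b + 1) → V :=
  Fin.snoc θ.branch (θ.trunk θ.attach)

def edges [DecidableEq V] (θ : Witness V a b) : Finset (Sym2 V) :=
  pathEdges θ.trunk ∪ pathEdges θ.branchPath

def IsSimple (θ : Witness V a b) : Prop :=
  Injective θ.trunk ∧ Injective θ.branch ∧ ∀ i, θ.branch i ∉ Set.range θ.trunk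

variable {θ : Witness V a b}

theorem IsSimple.injective_branchPath (hθ : θ.IsSimple) : Injective θ.branchPath :=
  Fin.snoc_injective_iff.mpr ⟨hθ.2.1, fun ⟨i, hi⟩ => hθ.2.2 i ⟨θ.attach, hi.symm⟩⟩

theorem IsSimple.lt_card [Fintype V] (hθ : θ.IsSimple) :
    a < Fintype.card V ∧ b < Fintype.card V :=
  ⟨by simpa using Fintype.card_le_of_injective _ hθ.1,
    by simpa using Fintype.card_le_of_injective _ hθ.injective_branchPath⟩

theorem IsSimple.card_edges [DecidableEq V] (hθ : θ.IsSimple) : #θ.edges = a + b := by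
  rw [edges, card_union_of_disjoint, card_pathEdges hθ.1, card_pathEdges hθ.injective_branchPath]
  rw [Finset.disjoint_left]
  intro e he he'
  obtain ⟨i, rfl⟩ := mem_pathEdges.mp he
  obtain ⟨j, hj⟩ := mem_pathEdges.mp he'
  -- every edge of the branch path has an endpoint off the trunk
  have hmem : θ.branch j ∈ s(θ.trunk i.castSucc, θ.trunk i.succ) := by
    rw [← hj, branchPath, Fin.snoc_castSucc]
    exact Sym2.mem_mk_left _ _
  rcases Sym2.mem_iff.mp hmem with h | h <;> exact hθ.2.2 j ⟨_, h.symm⟩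

end Witness

noncomputable def simpleWitnesses (V : Type*) [Fintype V] (a b : ℕ) :
    Finset (Witness V a b) :=
  {θ | θ.IsSimple}

theorem card_simpleWitnesses_le (V : Type*) [Fintype V] (a b : ℕ) :
    #(simpleWitnesses V a b) ≤ Fintype.card V ^ (a + 1) * ((a + 1) * Fintype.card V ^ b) :=
  (card_filter_le _ _).trans_eq Witness.card

section Reachable

variable {V : Type*} [DecidableEq V] {G : SimpleGraph V}

theorem exists_isSimple_witness {u v w : V} (hu : G.Reachable u v) (hw : G.Reachable w v) :
    ∃ a b, ∃ θ : Witness V a b, θ.IsSimple ∧ ↑θ.edges ⊆ G.edgeSet ∧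
      θ.trunk 0 = v ∧ θ.trunk (Fin.last a) = u ∧ θ.branchPath 0 = w := by
  obtain ⟨p⟩ := hu.symm
  obtain ⟨q⟩ := hw
  set P := p.bypass
  set Q := q.bypass
  have hP : P.IsPath := p.bypass_isPath
  have hQ : Q.IsPath := q.bypass_isPath
  -- `Q` is cut at its first vertex on `P`
  have hex : ∃ j, Q.getVert j ∈ P.support :=
    ⟨Q.length, by rw [Q.getVert_length]; exact P.start_mem_support⟩
  set j := Nat.find hex
  have hjQ : j ≤ Q.length :=
    Nat.find_min' hex (by rw [Q.getVert_length]; exact P.start_mem_support)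
  obtain ⟨k, hkj, hkP⟩ := Walk.mem_support_iff_exists_getVert.mp (Nat.find_spec hex)
  let θ : Witness V P.length j :=
    ⟨fun i => P.getVert i, ⟨k, by omega⟩, fun i => Q.getVert i⟩
  have hbranch : θ.branchPath = fun i : Fin (j + 1) => Q.getVert i := by
    funext i
    refine Fin.lastCases ?_ (fun i => ?_) i
    · simp [θ, Witness.branchPath, hkj, j]
    · simp [θ, Witness.branchPath]
  refine ⟨P.length, j, θ, ⟨hP.injective_getVert le_rfl, ?_, ?_⟩, ?_, P.getVert_zero,
    P.getVert_length, by rw [hbranch]; exact Q.getVert_zero⟩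
  · exact (hQ.injective_getVert hjQ).comp (Fin.castSucc_injective j)
  · rintro i ⟨i', hi'⟩
    have hi' : P.getVert i' = Q.getVert i := hi'
    exact Nat.find_min hex i.isLt (hi' ▸ P.getVert_mem_support i')
  · rw [Witness.edges, coe_union, Set.union_subset_iff, hbranch]
    exact ⟨P.coe_pathEdges_getVert_subset le_rfl, Q.coe_pathEdges_getVert_subset hjQ⟩

end Reachable

theorem sum_card_reachable_sq_le {V : Type*} [Fintype V] [DecidableEq V] (G : SimpleGraph V)
    [DecidableRel G.Reachable] :
    ∑ v, #{u | G.Reachable u v} ^ 2 ≤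
      ∑ a ∈ range (Fintype.card V), ∑ b ∈ range (Fintype.card V),
        #{θ ∈ simpleWitnesses V a b | ↑θ.edges ⊆ G.edgeSet} := by
  set T := univ.sigma fun v =>
    ({u | G.Reachable u v} : Finset V) ×ˢ ({w | G.Reachable w v} : Finset V)
  set W := (range (Fintype.card V)).sigma fun a => (range (Fintype.card V)).sigma fun b =>
    {θ ∈ simpleWitnesses V a b | ↑θ.edges ⊆ G.edgeSet}
  have hTW : #T ≤ #W := by
    refine card_le_card_of_surjOn
      (fun θ => ⟨θ.2.2.trunk 0, θ.2.2.trunk (Fin.last _), θ.2.2.branchPath 0⟩) ?_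
    rintro ⟨v, u, w⟩ hvuw
    simp only [T, coe_sigma, Set.mem_sigma_iff, coe_univ, Set.mem_univ, true_and, coe_product,
      Set.mem_prod, mem_coe, mem_filter, mem_univ] at hvuw
    obtain ⟨a, b, θ, hθ, hE, rfl, rfl, rfl⟩ := exists_isSimple_witness hvuw.1 hvuw.2
    exact ⟨⟨a, b, θ⟩, by simp [W, simpleWitnesses, hθ, hE, hθ.lt_card], rfl⟩
  simpa [T, W, card_sigma, sq] using hTW

theorem sum_range_pow_le {r : ℝ} (h0 : 0 ≤ r) (h1 : r < 1) (n : ℕ) :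
    ∑ i ∈ range n, r ^ i ≤ (1 - r)⁻¹ :=
  sum_le_hasSum _ (fun i _ => pow_nonneg h0 i) (hasSum_geometric_of_lt_one h0 h1)

theorem sum_range_add_one_mul_pow_le {r : ℝ} (h0 : 0 ≤ r) (h1 : r < 1) (n : ℕ) :
    ∑ i ∈ range n, ((i : ℝ) + 1) * r ^ i ≤ ((1 - r) ^ 2)⁻¹ := by
  have hr : ‖r‖ < 1 := by rwa [Real.norm_of_nonneg h0]
  simpa using sum_le_hasSum (range n) (fun i _ => by positivity)
    (hasSum_choose_mul_geometric_of_norm_lt_one 1 hr)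

theorem edgeSets_eq_powersetCard (n M : ℕ) :
    edgeSets n M = (⊤ : SimpleGraph (Fin n)).edgeFinset.powersetCard M := by
  ext E
  simp [edgeSets, mem_powersetCard, subset_iff, and_comm]

theorem compSize_eq_card {n : ℕ} (E : Finset (Sym2 (Fin n))) (v : Fin n) :
    compSize E v = #{u | (fromEdgeSet (E : Set (Sym2 (Fin n)))).Reachable u v} := by
  rw [compSize, ← Set.ncard_coe_finset]
  simp

theorem card_filter_edgeSets_subset_le {n : ℕ} (hn : 2 ≤ n) (M : ℕ) {a b : ℕ}
    {θ : Witness (Fin n) a b} (hθ : θ.IsSimple) :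
    (#{E ∈ edgeSets n M | θ.edges ⊆ E} : ℝ) ≤
      #(edgeSets n M) * ((M : ℝ) / n.choose 2) ^ (a + b) := by
  have hN : #(⊤ : SimpleGraph (Fin n)).edgeFinset = n.choose 2 := by
    rw [card_edgeFinset_top_eq_card_choose_two, Fintype.card_fin]
  rw [edgeSets_eq_powersetCard, ← hθ.card_edges, ← hN]
  exact card_filter_powersetCard_subset_le (card_pos.mp (hN ▸ Nat.choose_pos hn)) _ _

theorem sum_sum_compSize_sq_le (n : ℕ) (Ω : Finset (Finset (Sym2 (Fin n)))) :
    ∑ E ∈ Ω, ∑ v, compSize E v ^ 2 ≤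
      ∑ a ∈ range n, ∑ b ∈ range n, ∑ θ ∈ simpleWitnesses (Fin n) a b,
        #{E ∈ Ω | θ.edges ⊆ E} := by
  calc ∑ E ∈ Ω, ∑ v, compSize E v ^ 2
      ≤ ∑ E ∈ Ω, ∑ a ∈ range n, ∑ b ∈ range n,
          #{θ ∈ simpleWitnesses (Fin n) a b | θ.edges ⊆ E} := by
        gcongr with E
        simp_rw [compSize_eq_card]
        refine (sum_card_reachable_sq_le _).trans ?_
        simp only [Fintype.card_fin]
        gcongr with a _ b _ θ
        rw [edgeSet_fromEdgeSet]
        exact fun h => coe_subset.mp (h.trans Set.sdiff_subset)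
    _ = ∑ a ∈ range n, ∑ b ∈ range n, ∑ θ ∈ simpleWitnesses (Fin n) a b,
          #{E ∈ Ω | θ.edges ⊆ E} := by
        rw [sum_comm]
        refine sum_congr rfl fun a _ => ?_
        rw [sum_comm]
        refine sum_congr rfl fun b _ => ?_
        exact sum_card_bipartiteAbove_eq_sum_card_bipartiteBelow _

theorem sum_sum_pow_mul_pow_le {n : ℕ} {ρ c : ℝ} (hρ0 : 0 ≤ ρ) (hρ : n * ρ ≤ c)
    (hc1 : c < 1) :
    ∑ a ∈ range n, ∑ b ∈ range n, (n : ℝ) ^ (a + 1) * ((a + 1) * n ^ b) * ρ ^ (a + b) ≤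
      n / (1 - c) ^ 3 := by
  have hc0 : 0 ≤ c := (by positivity : (0 : ℝ) ≤ n * ρ).trans hρ
  calc ∑ a ∈ range n, ∑ b ∈ range n, (n : ℝ) ^ (a + 1) * ((a + 1) * n ^ b) * ρ ^ (a + b)
      = n * ((∑ a ∈ range n, ((a : ℝ) + 1) * (n * ρ) ^ a) *
          ∑ b ∈ range n, (n * ρ) ^ b) := by
        rw [sum_mul_sum, mul_sum]
        refine sum_congr rfl fun a _ => ?_
        rw [mul_sum]
        refine sum_congr rfl fun b _ => ?_
        ring
    _ ≤ n * ((∑ a ∈ range n, ((a : ℝ) + 1) * c ^ a) * ∑ b ∈ range n, c ^ b) := by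
        gcongr
    _ ≤ n * (((1 - c) ^ 2)⁻¹ * (1 - c)⁻¹) := by
        gcongr
        · exact sum_range_add_one_mul_pow_le hc0 hc1 n
        · exact sum_range_pow_le hc0 hc1 n
    _ = n / (1 - c) ^ 3 := by
        simp only [div_eq_mul_inv, ← inv_pow]
        ring

theorem sum_expected_compSize_sq_le {n M : ℕ} {c : ℝ} (hn : 2 ≤ n) (hc1 : c < 1)
    (hc : n * M ≤ c * n.choose 2) :
    ∑ v : Fin n, (∑ E ∈ edgeSets n M, (compSize E v : ℝ) ^ 2) / #(edgeSets n M) ≤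
      n / (1 - c) ^ 3 := by
  set Ω := edgeSets n M
  set ρ : ℝ := M / n.choose 2
  have hρ : n * ρ ≤ c := by
    rwa [← mul_div_assoc, div_le_iff₀ (by exact_mod_cast Nat.choose_pos hn)]
  rw [← sum_div, sum_comm]
  refine div_le_of_le_mul₀ (by positivity) (div_nonneg n.cast_nonneg (by bound)) ?_
  calc ∑ E ∈ Ω, ∑ v, (compSize E v : ℝ) ^ 2
      ≤ ∑ a ∈ range n, ∑ b ∈ range n, ∑ θ ∈ simpleWitnesses (Fin n) a b,
          (#{E ∈ Ω | θ.edges ⊆ E} : ℝ) := by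
        exact_mod_cast sum_sum_compSize_sq_le n Ω
    _ ≤ ∑ a ∈ range n, ∑ b ∈ range n,
          #(simpleWitnesses (Fin n) a b) * (#Ω * ρ ^ (a + b)) := by
        gcongr with a _ b _
        rw [← nsmul_eq_mul, ← sum_const]
        exact sum_le_sum fun θ hθ => card_filter_edgeSets_subset_le hn M (mem_filter.mp hθ).2
    _ ≤ ∑ a ∈ range n, ∑ b ∈ range n,
          n ^ (a + 1) * ((a + 1) * n ^ b) * (#Ω * ρ ^ (a + b)) := by
        gcongr with a _ b _
        exact_mod_cast (card_simpleWitnesses_le (Fin n) a b).trans_eq (by rw [Fintype.card_fin])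
    _ = (∑ a ∈ range n, ∑ b ∈ range n,
          n ^ (a + 1) * ((a + 1) * n ^ b) * ρ ^ (a + b)) * #Ω := by
        simp only [sum_mul]
        exact sum_congr rfl fun a _ => sum_congr rfl fun b _ => by ring
    _ ≤ n / (1 - c) ^ 3 * #Ω := by
        gcongr
        exact sum_sum_pow_mul_pow_le (by positivity) hρ hc1

/-- **Equation (3.3).** Let `G(n, M)` be the uniform Erdős–Rényi random graph with `n` vertices
and `M = M(n) ∼ 0.15 n` edges.  Then, for sufficiently large `n`,
`Σ_{v} E[|C(v)|²] ≤ 5n`. -/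
theorem stmt_14 :
    ∀ M : ℕ → ℕ, Tendsto (fun n => (M n : ℝ) / (n : ℝ)) atTop (nhds 0.15) →
      ∀ᶠ n : ℕ in atTop,
        ∑ v : Fin n,
            (∑ E ∈ edgeSets n (M n), (compSize E v : ℝ) ^ 2) / ((edgeSets n (M n)).card : ℝ) ≤
          5 * (n : ℝ) := by
  intro M hM
  have hM16 : ∀ᶠ n : ℕ in atTop, (M n : ℝ) / n ≤ 0.16 :=
    hM.eventually (eventually_le_nhds (by norm_num))
  filter_upwards [hM16, eventually_ge_atTop 12] with n hMn hn
  have hn' : (12 : ℝ) ≤ n := by exact_mod_cast hn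
  have hMn' : (M n : ℝ) ≤ 0.16 * n := by rwa [div_le_iff₀ (by positivity)] at hMn
  have hc : (n : ℝ) * M n ≤ 0.35 * n.choose 2 := by
    rw [Nat.cast_choose_two]
    nlinarith
  calc _ ≤ n / (1 - 0.35 : ℝ) ^ 3 :=
        sum_expected_compSize_sq_le (by omega) (by norm_num) hc
    _ ≤ 5 * n := by
        rw [div_le_iff₀ (by norm_num)]
        nlinarith
end
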